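/- arXiv:2103.16845 — 4 statements merged into one kernel-verified Lean document; each statement's English description precedes it below -/
import Mathlib

section
/- With C_{n,s,p} = sp·2^{2s-1}Γ((n+sp)/2) / (2π^{(n-1)/2}Γ(1-s)Γ((p+1)/2)) and Θ_{m,n,p} = H^{m-1}(S^{m-1})∫₀^∞ t^{m-1}/(1+t²)^{(n+sp)/2} dt, one has C_{n,s,p} · Θ_{m,n,p} = C_{n-m,s,p} for all integers 1 ≤ m < n, 0 < s < 1, 1 ≤ p < ∞. -/
open MeasureTheory Real

/-- The normalizing constant `C_{k,s,p}` of the fractional `p`-Laplacian. -/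
noncomputable def fracConst (k : ℕ) (s p : ℝ) : ℝ :=
  s * p * 2 ^ (2 * s - 1) * Real.Gamma (((k : ℝ) + s * p) / 2) /
    (2 * Real.pi ^ (((k : ℝ) - 1) / 2) * Real.Gamma (1 - s) * Real.Gamma ((p + 1) / 2))

/-- `Θ_{m,n,p} = H^{m-1}(S^{m-1}) ∫₀^∞ t^{m-1}/(1+t²)^{(n+sp)/2} dt`,
with `H^{m-1}(S^{m-1}) = 2π^{m/2}/Γ(m/2)`. -/
noncomputable def Theta (m n : ℕ) (s p : ℝ) : ℝ :=
  (2 * Real.pi ^ ((m : ℝ) / 2) / Real.Gamma ((m : ℝ) / 2)) *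
    ∫ t in Set.Ioi (0:ℝ), t ^ ((m : ℝ) - 1) / (1 + t ^ 2) ^ (((n : ℝ) + s * p) / 2)

/-!
The substitution `v = t² / (1 + t²)` turns the radial integral in `Θ_{m,n,p}` into the Beta
integral `B(m/2, (n+sp-m)/2) / 2`, so `Θ_{m,n,p} = π^{m/2} Γ((n+sp-m)/2) / Γ((n+sp)/2)`. The
identity is then the exchange of `Γ((n+sp)/2) π^{-(n-1)/2}` for `Γ((n-m+sp)/2) π^{-(n-m-1)/2}`
in `C_{n,s,p}`, all other factors depending on `s` and `p` only.
-/

open Set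

lemma integral_Ioo_rpow_mul_one_sub_rpow {x y : ℝ} (hx : 0 < x) (hy : 0 < y) :
    ∫ v in Ioo (0 : ℝ) 1, v ^ (x - 1) * (1 - v) ^ (y - 1) =
      Gamma x * Gamma y / Gamma (x + y) := by
  have hcast : Complex.betaIntegral x y =
      ↑(∫ v in (0 : ℝ)..1, v ^ (x - 1) * (1 - v) ^ (y - 1)) := by
    rw [Complex.betaIntegral, ← intervalIntegral.integral_ofReal]
    refine intervalIntegral.integral_congr fun v ⟨hv0, hv1⟩ => ?_
    simp only [zero_le_one, inf_of_le_left, sup_of_le_right] at hv0 hv1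
    push_cast
    rw [Complex.ofReal_cpow hv0, Complex.ofReal_cpow (sub_nonneg.2 hv1)]
    push_cast
    rfl
  have h := Complex.betaIntegral_eq_Gamma_mul_div x y (by simpa) (by simpa)
  rw [hcast, ← Complex.ofReal_add, Complex.Gamma_ofReal, Complex.Gamma_ofReal,
    Complex.Gamma_ofReal] at h
  rw [← integral_Ioc_eq_integral_Ioo, ← intervalIntegral.integral_of_le zero_le_one]
  exact_mod_cast h

lemma image_sq_div_one_add_sq_Ioi :
    (fun t : ℝ => t ^ 2 / (1 + t ^ 2)) '' Ioi 0 = Ioo 0 1 := by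
  ext v
  constructor
  · rintro ⟨t, ht, rfl⟩
    have ht : 0 < t := ht
    exact ⟨by positivity, (div_lt_one (by positivity)).2 (by linarith)⟩
  · rintro ⟨hv0, hv1⟩
    have hw : 0 < 1 - v := sub_pos.2 hv1
    refine ⟨√(v / (1 - v)), Real.sqrt_pos.2 (div_pos hv0 hw), ?_⟩
    simp only [Real.sq_sqrt (div_pos hv0 hw).le]
    field_simp
    ring

lemma strictMonoOn_sq_div_one_add_sq :
    StrictMonoOn (fun t : ℝ => t ^ 2 / (1 + t ^ 2)) (Ioi 0) := by
  intro a ha b hb hab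
  have ha : 0 < a := ha
  simp only
  rw [div_lt_div_iff₀ (by positivity) (by positivity)]
  nlinarith [mul_lt_mul'' hab hab ha.le ha.le]

lemma hasDerivAt_sq_div_one_add_sq (t : ℝ) :
    HasDerivAt (fun t : ℝ => t ^ 2 / (1 + t ^ 2)) (2 * t / (1 + t ^ 2) ^ 2) t := by
  have h := (hasDerivAt_pow 2 t).div ((hasDerivAt_pow 2 t).const_add 1) (by positivity)
  exact h.congr_deriv (by norm_num; ring)

lemma integral_Ioi_rpow_div_one_add_sq_rpow {x y : ℝ} (hx : 0 < x) (hy : 0 < y) :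
    ∫ t in Ioi (0 : ℝ), t ^ (2 * x - 1) / (1 + t ^ 2) ^ (x + y) =
      Gamma x * Gamma y / (2 * Gamma (x + y)) := by
  have hsubst := integral_image_eq_integral_abs_deriv_smul measurableSet_Ioi
    (fun t _ => (hasDerivAt_sq_div_one_add_sq t).hasDerivWithinAt)
    strictMonoOn_sq_div_one_add_sq.injOn (fun v => v ^ (x - 1) * (1 - v) ^ (y - 1))
  have hpt : ∀ t ∈ Ioi (0 : ℝ), |2 * t / (1 + t ^ 2) ^ 2| •
      ((t ^ 2 / (1 + t ^ 2)) ^ (x - 1) * (1 - t ^ 2 / (1 + t ^ 2)) ^ (y - 1)) =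
      2 * (t ^ (2 * x - 1) / (1 + t ^ 2) ^ (x + y)) := by
    intro t (ht : 0 < t)
    have hw : 0 < 1 + t ^ 2 := by positivity
    have hsq : (t ^ 2) ^ (x - 1) = t ^ (2 * x - 2) := by
      rw [← rpow_two, ← rpow_mul ht.le]; ring_nf
    have hcompl : 1 - t ^ 2 / (1 + t ^ 2) = (1 + t ^ 2)⁻¹ := by field_simp; ring
    have ht_exp : t ^ (2 * x - 1) = t * t ^ (2 * x - 2) := by
      rw [show 2 * x - 1 = 1 + (2 * x - 2) by ring, rpow_add ht, rpow_one]
    have hw_exp : (1 + t ^ 2) ^ (x + y) =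
        (1 + t ^ 2) ^ 2 * (1 + t ^ 2) ^ (x - 1) * (1 + t ^ 2) ^ (y - 1) := by
      rw [show x + y = 2 + (x - 1) + (y - 1) by ring, rpow_add hw, rpow_add hw, rpow_two]
    rw [smul_eq_mul, abs_of_pos (by positivity), div_rpow (by positivity) hw.le, hcompl,
      inv_rpow hw.le, hsq, ht_exp, hw_exp]
    field_simp
  rw [image_sq_div_one_add_sq_Ioi, integral_Ioo_rpow_mul_one_sub_rpow hx hy,
    setIntegral_congr_fun measurableSet_Ioi hpt, integral_const_mul] at hsubst
  linear_combination -hsubst / 2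

lemma Theta_eq (m n : ℕ) (s p : ℝ) (hm : 0 < m) (hmn : (m : ℝ) < n + s * p) :
    Theta m n s p =
      π ^ ((m : ℝ) / 2) * Gamma ((n + s * p - m) / 2) / Gamma ((n + s * p) / 2) := by
  have hint := integral_Ioi_rpow_div_one_add_sq_rpow (x := (m : ℝ) / 2) (y := (n + s * p - m) / 2)
    (by positivity) (by linarith)
  rw [show 2 * ((m : ℝ) / 2) - 1 = m - 1 by ring,
    show (m : ℝ) / 2 + (n + s * p - m) / 2 = (n + s * p) / 2 by ring] at hint
  have hGm : Gamma ((m : ℝ) / 2) ≠ 0 := (Gamma_pos_of_pos (by positivity)).ne'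
  rw [Theta, hint]
  field_simp

lemma fracConst_eq_mul (k : ℕ) (s p : ℝ) :
    fracConst k s p = s * p * 2 ^ (2 * s - 1) / (2 * Gamma (1 - s) * Gamma ((p + 1) / 2)) *
      (Gamma ((k + s * p) / 2) / π ^ (((k : ℝ) - 1) / 2)) := by
  rw [fracConst]
  ring

theorem stmt_3_general (m n : ℕ) (s p : ℝ) (hm : 1 ≤ m) (hmn : m < n)
    (hs0 : 0 < s) (hp : 1 ≤ p) :
    fracConst n s p * Theta m n s p = fracConst (n - m) s p := by
  have hmn' : (m : ℝ) < n + s * p := by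
    have : (m : ℝ) < n := by exact_mod_cast hmn
    nlinarith
  have hG : Gamma ((n + s * p) / 2) ≠ 0 := (Gamma_pos_of_pos (by positivity)).ne'
  have hπ : π ^ (((n : ℝ) - 1) / 2) =
      π ^ ((m : ℝ) / 2) * π ^ (((n : ℝ) - m - 1) / 2) := by
    rw [← rpow_add pi_pos]
    ring_nf
  rw [fracConst_eq_mul, fracConst_eq_mul, mul_assoc, Theta_eq m n s p hm hmn',
    Nat.cast_sub hmn.le, hπ, show ((n : ℝ) - m + s * p) / 2 = (n + s * p - m) / 2 by ring]
  congr 1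
  field_simp

/-- `C_{n,s,p} · Θ_{m,n,p} = C_{n-m,s,p}` for integers `1 ≤ m < n`, `0 < s < 1`, `1 ≤ p < ∞`. -/
theorem stmt_3 (m n : ℕ) (s p : ℝ) (hm : 1 ≤ m) (hmn : m < n)
    (hs0 : 0 < s) (hs1 : s < 1) (hp : 1 ≤ p) :
    fracConst n s p * Theta m n s p = fracConst (n - m) s p :=
  stmt_3_general m n s p hm hmn hs0 hp
end

section
/- (Discrete Picone inequality) Let p ∈ (1,∞) and let f, g : ℝⁿ → ℝ be measurable with f ≥ 0 and g > 0. Then for all x, y, L(f,g)(x,y) := |f(x)-f(y)|^p - |g(x)-g(y)|^{p-2}(g(x)-g(y))·(f(x)^p/g(x)^{p-1} - f(y)^p/g(y)^{p-1}) ≥ 0. -/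
open Real Set

/-! With `c = g x`, `d = g y`, `d < c`: from `a ≤ |a - b| + b` and convexity of `t ↦ t ^ p` with
weights `(c - d) / c` and `d / c` (Radon's inequality),
`a ^ p ≤ c ^ (p - 1) * (|a - b| ^ p / (c - d) ^ (p - 1) + b ^ p / d ^ (p - 1))`,
which rearranges to the claim. The case `c < d` follows by symmetry, and `c = d` is trivial. -/

namespace Real

lemma add_rpow_le_rpow_add_mul_div_add_div {p u v x y : ℝ} (hp : 1 ≤ p) (hu : 0 < u)
    (hv : 0 < v) (hx : 0 ≤ x) (hy : 0 ≤ y) :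
    (x + y) ^ p ≤ (u + v) ^ (p - 1) * (x ^ p / u ^ (p - 1) + y ^ p / v ^ (p - 1)) := by
  have hs : 0 < u + v := by positivity
  have hconv := (convexOn_rpow hp).2 (mem_Ici.2 (by positivity : 0 ≤ (u + v) * x / u))
    (mem_Ici.2 (by positivity : 0 ≤ (u + v) * y / v)) (div_pos hu hs).le (div_pos hv hs).le
    (by field_simp)
  have hsum : u / (u + v) * ((u + v) * x / u) + v / (u + v) * ((u + v) * y / v) = x + y := by
    field_simp
  simp only [smul_eq_mul, hsum] at hconv
  refine hconv.trans_eq ?_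
  rw [div_rpow (mul_nonneg hs.le hx) hu.le, div_rpow (mul_nonneg hs.le hy) hv.le,
    mul_rpow hs.le hx, mul_rpow hs.le hy, rpow_sub_one hs.ne', rpow_sub_one hu.ne',
    rpow_sub_one hv.ne']
  field_simp

lemma picone_of_lt {p a b c d : ℝ} (hp : 1 ≤ p) (ha : 0 ≤ a) (hb : 0 ≤ b) (hd : 0 < d)
    (hdc : d < c) :
    (c - d) ^ (p - 1) * (a ^ p / c ^ (p - 1) - b ^ p / d ^ (p - 1)) ≤ |a - b| ^ p := by
  have hcd : 0 < c - d := sub_pos.2 hdc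
  have hA : 0 < (c - d) ^ (p - 1) := rpow_pos_of_pos hcd _
  have hC : 0 < c ^ (p - 1) := rpow_pos_of_pos (hd.trans hdc) _
  have key : a ^ p / c ^ (p - 1) ≤ |a - b| ^ p / (c - d) ^ (p - 1) + b ^ p / d ^ (p - 1) := by
    rw [div_le_iff₀' hC]
    calc a ^ p ≤ (|a - b| + b) ^ p := by
          gcongr
          linarith [le_abs_self (a - b)]
      _ ≤ ((c - d) + d) ^ (p - 1) * (|a - b| ^ p / (c - d) ^ (p - 1) + b ^ p / d ^ (p - 1)) :=
          add_rpow_le_rpow_add_mul_div_add_div hp hcd hd (abs_nonneg _) hb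
      _ = _ := by rw [sub_add_cancel]
  calc (c - d) ^ (p - 1) * (a ^ p / c ^ (p - 1) - b ^ p / d ^ (p - 1))
      ≤ (c - d) ^ (p - 1) * (|a - b| ^ p / (c - d) ^ (p - 1)) := by
        gcongr
        linarith
    _ = |a - b| ^ p := mul_div_cancel₀ _ hA.ne'

lemma abs_rpow_sub_two_mul_self_of_pos {p t : ℝ} (ht : 0 < t) :
    |t| ^ (p - 2) * t = t ^ (p - 1) := by
  rw [abs_of_pos ht, ← rpow_add_one ht.ne']
  ring_nf

lemma picone {p a b c d : ℝ} (hp : 1 ≤ p) (ha : 0 ≤ a) (hb : 0 ≤ b) (hc : 0 < c)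
    (hd : 0 < d) :
    |c - d| ^ (p - 2) * (c - d) * (a ^ p / c ^ (p - 1) - b ^ p / d ^ (p - 1)) ≤ |a - b| ^ p := by
  wlog hdc : d ≤ c generalizing a b c d
  · calc |c - d| ^ (p - 2) * (c - d) * (a ^ p / c ^ (p - 1) - b ^ p / d ^ (p - 1))
        = |d - c| ^ (p - 2) * (d - c) * (b ^ p / d ^ (p - 1) - a ^ p / c ^ (p - 1)) := by
          rw [abs_sub_comm]
          ring
      _ ≤ |b - a| ^ p := this hb ha hd hc (le_of_not_ge hdc)
      _ = |a - b| ^ p := by rw [abs_sub_comm]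
  rcases hdc.eq_or_lt with rfl | hdc
  · simp only [sub_self, mul_zero, zero_mul]
    positivity
  · rw [abs_rpow_sub_two_mul_self_of_pos (sub_pos.2 hdc)]
    exact picone_of_lt hp ha hb hd hdc

end Real

theorem stmt_4_general (n : ℕ) (p : ℝ) (hp : 1 < p)
    (f g : EuclideanSpace ℝ (Fin n) → ℝ)
    (hf0 : ∀ x, 0 ≤ f x) (hg0 : ∀ x, 0 < g x) :
    ∀ x y : EuclideanSpace ℝ (Fin n),
      0 ≤ |f x - f y| ^ p -
        |g x - g y| ^ (p - 2) * (g x - g y) *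
          (f x ^ p / g x ^ (p - 1) - f y ^ p / g y ^ (p - 1)) := fun x y =>
  sub_nonneg.2 (picone hp.le (hf0 x) (hf0 y) (hg0 x) (hg0 y))

/-- Discrete Picone inequality: for `p ∈ (1,∞)`, `f, g : ℝⁿ → ℝ` measurable with
`f ≥ 0`, `g > 0`, and all `x, y`,
`|f(x)-f(y)|^p ≥ |g(x)-g(y)|^{p-2}(g(x)-g(y))·(f(x)^p/g(x)^{p-1} - f(y)^p/g(y)^{p-1})`. -/
theorem stmt_4 (n : ℕ) (p : ℝ) (hp : 1 < p)
    (f g : EuclideanSpace ℝ (Fin n) → ℝ) (hf : Measurable f) (hg : Measurable g)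
    (hf0 : ∀ x, 0 ≤ f x) (hg0 : ∀ x, 0 < g x) :
    ∀ x y : EuclideanSpace ℝ (Fin n),
      0 ≤ |f x - f y| ^ p -
        |g x - g y| ^ (p - 2) * (g x - g y) *
          (f x ^ p / g x ^ (p - 1) - f y ^ p / g y ^ (p - 1)) :=
  stmt_4_general n p hp f g hf0 hg0
end

section
/- (Equality case in discrete Picone) Let p ∈ (1,∞), f, g : ℝⁿ → ℝ measurable with f ≥ 0, g > 0. Then L(f,g)(x,y) = 0 for a.e. (x,y) if and only if f = αg a.e. in ℝⁿ for some constant α ≥ 0. -/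
/-!
With `t = f x / g x`, `s = f y / g y`, the quantity `L(f,g)(x,y)` is bounded below by
tangent-line defects of the convex function `|·| ^ p`; by strict convexity it vanishes exactly
when `t = s`. Hence `L(f,g) = 0` a.e. says that `f / g` is a.e. constant on `ℝⁿ × ℝⁿ`, and by
Fubini it is a.e. equal to one of its values on `ℝⁿ`.
-/

open MeasureTheory Real

namespace Real

lemma abs_rpow_sub_two_mul_self {p : ℝ} (hp : p ≠ 0) (w : ℝ) :
    |w| ^ (p - 2) * w * w = |w| ^ p := by
  rcases eq_or_ne w 0 with rfl | hw
  · simp [zero_rpow hp]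
  · rw [mul_assoc, ← abs_mul_abs_self, ← mul_assoc, ← rpow_add_one (abs_ne_zero.2 hw),
      ← rpow_add_one (abs_ne_zero.2 hw)]
    ring_nf

lemma abs_rpow_sub_two_mul_of_nonneg {p w : ℝ} (hp : p ≠ 1) (hw : 0 ≤ w) :
    |w| ^ (p - 2) * w = w ^ (p - 1) := by
  rcases hw.eq_or_lt with rfl | hw
  · simp [zero_rpow (sub_ne_zero.2 hp)]
  · rw [abs_of_pos hw, ← rpow_add_one hw.ne']
    ring_nf

lemma strictMono_abs_rpow_sub_two_mul {p : ℝ} (hp : 1 < p) :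
    StrictMono fun x : ℝ ↦ |x| ^ (p - 2) * x := by
  have hodd (x : ℝ) : |x| ^ (p - 2) * x = -(|-x| ^ (p - 2) * -x) := by rw [abs_neg]; ring
  have hmono : StrictMonoOn (fun x : ℝ ↦ |x| ^ (p - 2) * x) (Set.Ici 0) := fun x hx y hy hxy ↦ by
    simp only [abs_rpow_sub_two_mul_of_nonneg hp.ne' (Set.mem_Ici.1 hx),
      abs_rpow_sub_two_mul_of_nonneg hp.ne' (Set.mem_Ici.1 hy)]
    exact rpow_lt_rpow (Set.mem_Ici.1 hx) hxy (by linarith)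
  intro x y hxy
  dsimp only
  rcases le_or_gt 0 x with hx | hx
  · exact hmono hx (hx.trans hxy.le) hxy
  rw [hodd x]
  rcases le_or_gt y 0 with hy | hy
  · rw [hodd y, neg_lt_neg_iff]
    exact hmono (neg_nonneg.2 hy) (neg_nonneg.2 hx.le) (neg_lt_neg hxy)
  · rw [abs_rpow_sub_two_mul_of_nonneg hp.ne' (neg_nonneg.2 hx.le),
      abs_rpow_sub_two_mul_of_nonneg hp.ne' hy.le]
    have := rpow_pos_of_pos (neg_pos.2 hx) (p - 1)
    have := rpow_pos_of_pos hy (p - 1)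
    linarith

lemma strictConvexOn_abs_rpow {p : ℝ} (hp : 1 < p) :
    StrictConvexOn ℝ Set.univ fun x : ℝ ↦ |x| ^ p := by
  refine StrictMono.strictConvexOn_univ_of_deriv (by fun_prop (disch := positivity)) ?_
  have hderiv : deriv (fun x : ℝ ↦ |x| ^ p) = fun x ↦ p * (|x| ^ (p - 2) * x) := by
    ext x; rw [(hasDerivAt_abs_rpow x hp).deriv, mul_assoc]
  rw [hderiv]
  exact (strictMono_abs_rpow_sub_two_mul hp).const_mul (by linarith)

lemma abs_rpow_add_mul_sub_lt {p A B : ℝ} (hp : 1 < p) (hAB : A ≠ B) :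
    |B| ^ p + p * (|B| ^ (p - 2) * B) * (A - B) < |A| ^ p := by
  have hderiv : HasDerivAt (fun x : ℝ ↦ |x| ^ p) (p * (|B| ^ (p - 2) * B)) B := by
    simpa only [mul_assoc] using hasDerivAt_abs_rpow B hp
  rcases hAB.lt_or_gt with h | h
  · have := (strictConvexOn_abs_rpow hp).slope_lt_of_hasDerivAt trivial trivial h hderiv
    rw [slope_def_field, div_lt_iff₀ (sub_pos.2 h)] at this
    linarith
  · have := (strictConvexOn_abs_rpow hp).lt_slope_of_hasDerivAt trivial trivial h hderiv
    rw [slope_def_field, lt_div_iff₀ (sub_pos.2 h)] at this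
    linarith

lemma rpow_sub_rpow_le_mul_sub {p t s : ℝ} (hp : 1 < p) (ht : 0 ≤ t) (hs : 0 ≤ s) :
    t ^ p - s ^ p ≤ p * t ^ (p - 1) * (t - s) := by
  rcases eq_or_ne s t with rfl | hst
  · simp
  have := abs_rpow_add_mul_sub_lt hp hst
  rw [abs_rpow_sub_two_mul_of_nonneg hp.ne' ht, abs_of_nonneg ht, abs_of_nonneg hs] at this
  linarith

lemma mul_rpow_div_rpow_sub_one {p t u : ℝ} (ht : 0 ≤ t) (hu : 0 < u) :
    (t * u) ^ p / u ^ (p - 1) = t ^ p * u := by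
  rw [mul_rpow ht hu.le, rpow_sub_one hu.ne']
  field_simp [(rpow_pos_of_pos hu p).ne']

end Real

/-- `L(f,g)(x,y)` of the discrete Picone inequality, in terms of `a = f x`, `b = f y`,
`u = g x`, `v = g y`. -/
noncomputable def piconeL (p a b u v : ℝ) : ℝ :=
  |a - b| ^ p - |u - v| ^ (p - 2) * (u - v) * (a ^ p / u ^ (p - 1) - b ^ p / v ^ (p - 1))

section Picone

variable {p a b u v : ℝ}

lemma piconeL_comm : piconeL p a b u v = piconeL p b a v u := by
  simp only [piconeL, abs_sub_comm a b, abs_sub_comm u v]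
  ring

lemma piconeL_mul_mul {t s : ℝ} (ht : 0 ≤ t) (hs : 0 ≤ s) (hu : 0 < u) (hv : 0 < v) :
    piconeL p (t * u) (s * v) u v =
      |t * u - s * v| ^ p - |u - v| ^ (p - 2) * (u - v) * (t ^ p * u - s ^ p * v) := by
  rw [piconeL, mul_rpow_div_rpow_sub_one ht hu, mul_rpow_div_rpow_sub_one hs hv]

/-- With `v ≤ u`, `L` dominates the tangent-line defect of `x ↦ x ^ p` at `t` (evaluated at `s`)
plus that of `x ↦ |x| ^ p` at `t (u - v)` (evaluated at `t u - s v`); the latter is positive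
when `t ≠ s`. -/
lemma piconeL_mul_mul_pos_of_le {t s : ℝ} (hp : 1 < p) (ht : 0 ≤ t) (hs : 0 ≤ s) (hu : 0 < u)
    (hv : 0 < v) (hvu : v ≤ u) (hts : t ≠ s) : 0 < piconeL p (t * u) (s * v) u v := by
  have hw : 0 ≤ u - v := sub_nonneg.2 hvu
  have htw : 0 ≤ t * (u - v) := mul_nonneg ht hw
  rw [piconeL_mul_mul ht hs hu hv, sub_pos, abs_rpow_sub_two_mul_of_nonneg hp.ne' hw]
  have hne : t * u - s * v ≠ t * (u - v) := fun h ↦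
    hts (by nlinarith [mul_right_cancel₀ hv.ne' (show t * v = s * v by linarith)])
  calc (u - v) ^ (p - 1) * (t ^ p * u - s ^ p * v)
      = t ^ p * ((u - v) ^ (p - 1) * (u - v)) + (u - v) ^ (p - 1) * v * (t ^ p - s ^ p) := by
        ring
    _ ≤ t ^ p * (u - v) ^ p + (u - v) ^ (p - 1) * v * (p * t ^ (p - 1) * (t - s)) := by
        rw [← rpow_add_one' hw (by linarith), sub_add_cancel]
        gcongr
        exact rpow_sub_rpow_le_mul_sub hp ht hs
    _ = |t * (u - v)| ^ p + p * (|t * (u - v)| ^ (p - 2) * (t * (u - v))) *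
          (t * u - s * v - t * (u - v)) := by
        rw [abs_rpow_sub_two_mul_of_nonneg hp.ne' htw, abs_of_nonneg htw,
          mul_rpow ht hw, mul_rpow ht hw]
        ring
    _ < |t * u - s * v| ^ p := abs_rpow_add_mul_sub_lt hp hne

lemma piconeL_pos_of_le (hp : 1 < p) (ha : 0 ≤ a) (hb : 0 ≤ b) (hu : 0 < u) (hv : 0 < v)
    (hvu : v ≤ u) (h : a / u ≠ b / v) : 0 < piconeL p a b u v := by
  have := piconeL_mul_mul_pos_of_le hp (div_nonneg ha hu.le) (div_nonneg hb hv.le) hu hv hvu h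
  rwa [div_mul_cancel₀ a hu.ne', div_mul_cancel₀ b hv.ne'] at this

lemma piconeL_pos (hp : 1 < p) (ha : 0 ≤ a) (hb : 0 ≤ b) (hu : 0 < u) (hv : 0 < v)
    (h : a / u ≠ b / v) : 0 < piconeL p a b u v := by
  rcases le_total v u with hvu | huv
  · exact piconeL_pos_of_le hp ha hb hu hv hvu h
  · rw [piconeL_comm]
    exact piconeL_pos_of_le hp hb ha hv hu huv h.symm

lemma piconeL_mul_mul_self {t : ℝ} (hp : p ≠ 0) (ht : 0 ≤ t) (hu : 0 < u) (hv : 0 < v) :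
    piconeL p (t * u) (t * v) u v = 0 := by
  rw [piconeL_mul_mul ht ht hu hv, ← mul_sub, abs_mul, abs_of_nonneg ht,
    mul_rpow ht (abs_nonneg _), ← abs_rpow_sub_two_mul_self hp]
  ring

lemma piconeL_eq_zero_iff (hp : 1 < p) (ha : 0 ≤ a) (hb : 0 ≤ b) (hu : 0 < u) (hv : 0 < v) :
    piconeL p a b u v = 0 ↔ a / u = b / v := by
  refine ⟨fun h ↦ by_contra fun hne ↦ (piconeL_pos hp ha hb hu hv hne).ne' h, fun h ↦ ?_⟩
  have := piconeL_mul_mul_self (zero_lt_one.trans hp).ne' (div_nonneg ha hu.le) hu hv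
  rwa [div_mul_cancel₀ a hu.ne', h, div_mul_cancel₀ b hv.ne'] at this

end Picone

lemma MeasureTheory.Measure.exists_ae_eq_of_ae_prod_eq {α β : Type*} [MeasurableSpace α]
    {μ : Measure α} [SFinite μ] [NeZero μ] {f : α → β}
    (h : ∀ᵐ z ∂μ.prod μ, f z.1 = f z.2) : ∃ x₀, ∀ᵐ x ∂μ, f x = f x₀ := by
  have : (ae μ).NeBot := ae_neBot.2 (NeZero.ne μ)
  obtain ⟨x₀, hx₀⟩ := (Measure.ae_ae_of_ae_prod h).exists
  exact ⟨x₀, hx₀.mono fun x hx ↦ hx.symm⟩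

theorem stmt_5_general (n : ℕ) (p : ℝ) (hp : 1 < p)
    (f g : EuclideanSpace ℝ (Fin n) → ℝ)
    (hf0 : ∀ x, 0 ≤ f x) (hg0 : ∀ x, 0 < g x) :
    (∀ᵐ z : EuclideanSpace ℝ (Fin n) × EuclideanSpace ℝ (Fin n),
        |f z.1 - f z.2| ^ p -
          |g z.1 - g z.2| ^ (p - 2) * (g z.1 - g z.2) *
            (f z.1 ^ p / g z.1 ^ (p - 1) - f z.2 ^ p / g z.2 ^ (p - 1)) = 0)
      ↔ ∃ α : ℝ, 0 ≤ α ∧ f =ᵐ[volume] fun x => α * g x := by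
  have hL (z : EuclideanSpace ℝ (Fin n) × EuclideanSpace ℝ (Fin n)) :
      piconeL p (f z.1) (f z.2) (g z.1) (g z.2) = 0 ↔ f z.1 / g z.1 = f z.2 / g z.2 :=
    piconeL_eq_zero_iff hp (hf0 _) (hf0 _) (hg0 _) (hg0 _)
  refine (Filter.eventually_congr (.of_forall hL)).trans ?_
  rw [Measure.volume_eq_prod]
  constructor
  · intro h
    obtain ⟨x₀, hx₀⟩ := Measure.exists_ae_eq_of_ae_prod_eq (f := fun x ↦ f x / g x) h
    exact ⟨f x₀ / g x₀, div_nonneg (hf0 x₀) (hg0 x₀).le,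
      hx₀.mono fun x hx ↦ (div_eq_iff (hg0 x).ne').1 hx⟩
  · rintro ⟨α, -, hfg⟩
    filter_upwards [Measure.quasiMeasurePreserving_fst.ae hfg,
      Measure.quasiMeasurePreserving_snd.ae hfg] with z h₁ h₂
    rw [h₁, h₂, mul_div_cancel_right₀ _ (hg0 _).ne', mul_div_cancel_right₀ _ (hg0 _).ne']

/-- Equality case in the discrete Picone inequality: with `p ∈ (1,∞)`, `f ≥ 0`, `g > 0`
measurable, `L(f,g) = 0` a.e. on `ℝⁿ × ℝⁿ` iff `f = αg` a.e. for some constant `α ≥ 0`. -/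
theorem stmt_5 (n : ℕ) (p : ℝ) (hp : 1 < p)
    (f g : EuclideanSpace ℝ (Fin n) → ℝ) (hf : Measurable f) (hg : Measurable g)
    (hf0 : ∀ x, 0 ≤ f x) (hg0 : ∀ x, 0 < g x) :
    (∀ᵐ z : EuclideanSpace ℝ (Fin n) × EuclideanSpace ℝ (Fin n),
        |f z.1 - f z.2| ^ p -
          |g z.1 - g z.2| ^ (p - 2) * (g z.1 - g z.2) *
            (f z.1 ^ p / g z.1 ^ (p - 1) - f z.2 ^ p / g z.2 ^ (p - 1)) = 0)
      ↔ ∃ α : ℝ, 0 ≤ α ∧ f =ᵐ[volume] fun x => α * g x :=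
  stmt_5_general n p hp f g hf0 hg0
end

section
/- For a ≥ 0, b ≥ 0 and q ≥ 1, one has (a+b)^q ≤ a^q + q·2^{q-1}·(a^{q-1}b + b^q). -/
/-!
Convexity of `x ↦ x ^ q` puts its graph above the tangent at `a + b`, so
`(a + b) ^ q - a ^ q ≤ q (a + b) ^ (q - 1) b`; then `(a + b) ^ (q - 1) ≤ 2 ^ (q - 1) (a ^ (q - 1) + b ^ (q - 1))`
by comparing `a + b` with `2 max a b`.
-/

namespace Real

lemma rpow_sub_rpow_le_mul_rpow_sub_one {x y p : ℝ} (hy : 0 ≤ y) (hyx : y ≤ x) (hp : 1 ≤ p) :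
    x ^ p - y ^ p ≤ p * x ^ (p - 1) * (x - y) := by
  rcases hyx.eq_or_lt with rfl | hlt
  · simp
  have hslope := (convexOn_rpow hp).slope_le_of_hasDerivAt (Set.mem_Ici.2 hy)
    (Set.mem_Ici.2 (hy.trans hlt.le)) hlt (hasDerivAt_rpow_const (Or.inr hp))
  rwa [slope_def_field, div_le_iff₀ (sub_pos.2 hlt)] at hslope

lemma add_rpow_le_two_rpow_mul_rpow_add_rpow {a b p : ℝ} (ha : 0 ≤ a) (hb : 0 ≤ b) (hp : 0 ≤ p) :
    (a + b) ^ p ≤ 2 ^ p * (a ^ p + b ^ p) := calc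
  (a + b) ^ p ≤ (2 * max a b) ^ p := by
    gcongr; rw [two_mul]; exact add_le_add (le_max_left a b) (le_max_right a b)
  _ = 2 ^ p * max a b ^ p := mul_rpow zero_le_two (le_max_of_le_left ha)
  _ = 2 ^ p * max (a ^ p) (b ^ p) := by rw [rpow_max ha hb hp]
  _ ≤ 2 ^ p * (a ^ p + b ^ p) := by
    gcongr; exact max_le_add_of_nonneg (rpow_nonneg ha p) (rpow_nonneg hb p)

end Real

/-- For `a, b ≥ 0` and `q ≥ 1`: `(a+b)^q ≤ a^q + q·2^{q-1}·(a^{q-1}b + b^q)`. -/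
theorem stmt_15 (a b q : ℝ) (ha : 0 ≤ a) (hb : 0 ≤ b) (hq : 1 ≤ q) :
    (a + b) ^ q ≤ a ^ q + q * 2 ^ (q - 1) * (a ^ (q - 1) * b + b ^ q) := by
  have htangent := Real.rpow_sub_rpow_le_mul_rpow_sub_one ha (le_add_of_nonneg_right hb) hq
  have hsum := Real.add_rpow_le_two_rpow_mul_rpow_add_rpow ha hb (sub_nonneg.2 hq)
  have hbq : b ^ q = b ^ (q - 1) * b := by
    rw [← Real.rpow_add_one' hb (by linarith), sub_add_cancel]
  calc (a + b) ^ q ≤ a ^ q + q * (a + b) ^ (q - 1) * b := by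
        rw [add_sub_cancel_left] at htangent; linarith
    _ ≤ a ^ q + q * (2 ^ (q - 1) * (a ^ (q - 1) + b ^ (q - 1))) * b := by gcongr
    _ = a ^ q + q * 2 ^ (q - 1) * (a ^ (q - 1) * b + b ^ q) := by rw [hbq]; ring
end
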